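/- Let X be a real Banach space, T : X ⇉ X* a maximal monotone operator, and h ∈ H(T) with h ≥ J h. Then an element h₀ ∈ L(h) is minimal in L(h) (with respect to the pointwise order) if and only if h₀ = J h₀. -/

import Mathlib

/- Setting: `X` is a real Banach space, `NormedSpace.Dual ℝ X` its topological dual.
A point-to-set operator `T : X ⇉ X*` is identified with its graph,
a subset of `X × NormedSpace.Dual ℝ X`.  Extended-real-valued functions
(`ℝ ∪ {+∞}`) are modelled by `EReal`. -/

noncomputable section

variable {X : Type*} [NormedAddCommGroup X] [NormedSpace ℝ X]

/-- The duality pairing `⟨x, x*⟩ = x*(x)` of a pair `p = (x, x*)`. -/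
def pairingFn (p : X × StrongDual ℝ X) : ℝ := p.2 p.1

/-- Convexity for extended-real-valued functions. -/
def EConvexOn {E : Type*} [AddCommMonoid E] [Module ℝ E] (h : E → EReal) : Prop :=
  ∀ p q : E, ∀ a b : ℝ, 0 ≤ a → 0 ≤ b → a + b = 1 →
    h (a • p + b • q) ≤ (a : EReal) * h p + (b : EReal) * h q

/-- `T` is a monotone operator: `⟨x - y, x* - y*⟩ ≥ 0` on the graph. -/
def MonotoneOp (T : Set (X × StrongDual ℝ X)) : Prop :=
  ∀ p ∈ T, ∀ q ∈ T, 0 ≤ (p.2 - q.2) (p.1 - q.1)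

/-- `T` is maximal monotone. -/
def MaximalMonotoneOp (T : Set (X × StrongDual ℝ X)) : Prop :=
  MonotoneOp T ∧
    ∀ p : X × StrongDual ℝ X, (∀ q ∈ T, 0 ≤ (p.2 - q.2) (p.1 - q.1)) → p ∈ T

/-- The transform `J h (x, x*) = sup_{(y, y*)} ⟨x, y*⟩ + ⟨y, x*⟩ - h (y, y*)`,
i.e. `J h (x, x*) = h* (x*, x)` via the canonical injection `X ↪ X**`. -/
def JT (h : X × StrongDual ℝ X → EReal) : X × StrongDual ℝ X → EReal :=
  fun p => ⨆ q : X × StrongDual ℝ X, (((q.2 p.1 + p.2 q.1 : ℝ) : EReal) - h q)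

/-- The family `H(T)` of convex lower semicontinuous functions on `X × X*`
majorizing the duality product and coinciding with it on `T`. -/
def HT (T : Set (X × StrongDual ℝ X)) : Set (X × StrongDual ℝ X → EReal) :=
  { h | EConvexOn h ∧ LowerSemicontinuous h ∧
      (∀ p : X × StrongDual ℝ X, (pairingFn p : EReal) ≤ h p) ∧
      (∀ p ∈ T, h p = (pairingFn p : EReal)) }

/-- The subfamily `H_a(T) = { h ∈ H(T) | h ≥ J h }`. -/
def Ha (T : Set (X × StrongDual ℝ X)) : Set (X × StrongDual ℝ X → EReal) :=
  { h | h ∈ HT T ∧ JT h ≤ h }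

/-- For `h ∈ H(T)`, the family `L(h) = { g ∈ H(T) | h ≥ g ≥ J g }`. -/
def Lfam (T : Set (X × StrongDual ℝ X)) (h : X × StrongDual ℝ X → EReal) :
    Set (X × StrongDual ℝ X → EReal) :=
  { g | g ∈ HT T ∧ g ≤ h ∧ JT g ≤ g }

/-- The Fenchel–Legendre conjugate `f*(x*) = sup_x ⟨x, x*⟩ - f x`. -/
def fconj (f : X → EReal) : StrongDual ℝ X → EReal :=
  fun x' => ⨆ x : X, (((x' x : ℝ) : EReal) - f x)

/-- The `ε`-subdifferential:
`∂_ε f (x) = { x* | f y ≥ f x + ⟨y - x, x*⟩ - ε for all y }`. -/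
def epsSubdiff (f : X → EReal) (ε : ℝ) (x : X) : Set (StrongDual ℝ X) :=
  { x' | ∀ y : X, f x + ((x' (y - x) - ε : ℝ) : EReal) ≤ f y }

/-- The graph of the subdifferential `∂f = ∂_0 f`. -/
def subdiffGraph (f : X → EReal) : Set (X × StrongDual ℝ X) :=
  { p | p.2 ∈ epsSubdiff f 0 p.1 }

/-- The `ε`-enlargement `T^ε (x) = { x* | ⟨x - y, x* - y*⟩ ≥ -ε for all (y, y*) ∈ T }`. -/
def enl (T : Set (X × StrongDual ℝ X)) (ε : ℝ) (x : X) :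
    Set (StrongDual ℝ X) :=
  { x' | ∀ q ∈ T, -ε ≤ (x' - q.2) (x - q.1) }

/-- The Fitzpatrick function
`φ_T (x, x*) = sup_{(y, y*) ∈ T} ⟨x, y*⟩ + ⟨y, x*⟩ - ⟨y, y*⟩`. -/
def fitz (T : Set (X × StrongDual ℝ X)) : X × StrongDual ℝ X → EReal :=
  fun p => ⨆ q ∈ T, ((q.2 p.1 + p.2 q.1 - q.2 q.1 : ℝ) : EReal)

/-! If `h₀ = J h₀` and `g ∈ L(h)` lies below `h₀`, then `h₀ = J h₀ ≤ J g ≤ g`. Conversely, for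
minimal `h₀` consider the proximal average
`u r = inf_w ½ J h₀ (r + w) + ½ h₀ (r - w) + ½ (‖w.1‖² + ‖w.2‖²)`. The Fenchel–Young inequality
for `h₀` and `J h₀`, applied at `(r - v, p + w)` and `(p - w, r + v)`, gives `J u ≤ u`, and
`J h₀ ≤ h₀` gives `u ≤ h₀`; so `J J u` is a member of `L(h)` below `h₀`, and minimality forces
`h₀ ≤ u`. With `w = 0` this reads `h₀ ≤ ½ J h₀ + ½ h₀`, hence `h₀ ≤ J h₀` where `h₀` is finite.
Where `J h₀` is finite, `h₀` is finite as well: iterating `h₀ ≤ u` along the segment towards a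
point of `T` bounds `h₀` on a sequence converging to the point, and `h₀` is lower semicontinuous.
-/

theorem EReal.coe_sub_le_comm (c : ℝ) (x y : EReal) :
    (c : EReal) - x ≤ y → (c : EReal) - y ≤ x := by
  induction x with
  | bot => simp +contextual
  | top => simp
  | coe x =>
    induction y with
    | bot => simp [← EReal.coe_sub]
    | top => simp
    | coe y => norm_cast; intro; linarith

theorem EConvexOn.iSup {E ι : Type*} [AddCommMonoid E] [Module ℝ E] {F : ι → E → EReal}
    (hF : ∀ i, EConvexOn (F i)) : EConvexOn fun p => ⨆ i, F i p := by
  intro p q a b ha hb hab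
  refine iSup_le fun i => (hF i p q a b ha hb hab).trans ?_
  gcongr <;> first | exact EReal.coe_nonneg.2 ‹_› | exact le_iSup (fun i => F i _) i

theorem econvexOn_coe_sub {E : Type*} [AddCommGroup E] [Module ℝ E] (ℓ : E →ₗ[ℝ] ℝ)
    (e : EReal) : EConvexOn fun p => (ℓ p : EReal) - e := by
  intro p q a b ha hb hab
  induction e with
  | bot =>
    simp [← EReal.right_distrib_of_nonneg (EReal.coe_nonneg.2 ha) (EReal.coe_nonneg.2 hb),
      ← EReal.coe_add, hab]
  | top => simp
  | coe e =>
    have key : a * ℓ p + b * ℓ q - e = a * (ℓ p - e) + b * (ℓ q - e) := by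
      linear_combination e * hab
    simp only [map_add, map_smul, smul_eq_mul]
    exact_mod_cast key.le

theorem continuous_coe_sub {α : Type*} [TopologicalSpace α] {f : α → ℝ} (hf : Continuous f)
    (e : EReal) : Continuous fun p => (f p : EReal) - e := by
  induction e with
  | bot => simpa using continuous_const
  | top => simpa using continuous_const
  | coe e => exact continuous_coe_real_ereal.comp (hf.sub continuous_const)

def coupling (q : X × StrongDual ℝ X) : (X × StrongDual ℝ X) →L[ℝ] ℝ :=
  q.2.comp (ContinuousLinearMap.fst ℝ X (StrongDual ℝ X)) +
    (ContinuousLinearMap.apply ℝ ℝ q.1).comp (ContinuousLinearMap.snd ℝ X (StrongDual ℝ X))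

theorem coupling_apply (p q : X × StrongDual ℝ X) : coupling q p = q.2 p.1 + p.2 q.1 := rfl

theorem coupling_comm (p q : X × StrongDual ℝ X) : coupling q p = coupling p q := add_comm _ _

theorem coupling_self (p : X × StrongDual ℝ X) : coupling p p = 2 * pairingFn p := two_mul _ |>.symm

theorem JT_apply (f : X × StrongDual ℝ X → EReal) (p : X × StrongDual ℝ X) :
    JT f p = ⨆ q, (coupling q p : EReal) - f q := rfl

theorem econvexOn_JT (f : X × StrongDual ℝ X → EReal) : EConvexOn (JT f) :=
  EConvexOn.iSup fun q => econvexOn_coe_sub (coupling q).toLinearMap (f q)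

theorem lowerSemicontinuous_JT (f : X × StrongDual ℝ X → EReal) : LowerSemicontinuous (JT f) :=
  lowerSemicontinuous_iSup fun q =>
    (continuous_coe_sub (coupling q).continuous _).lowerSemicontinuous

theorem coupling_sub_le_JT (f : X × StrongDual ℝ X → EReal) (p q : X × StrongDual ℝ X) :
    (coupling q p : EReal) - f q ≤ JT f p :=
  le_iSup (fun q => (coupling q p : EReal) - f q) q

theorem JT_antitone : Antitone (JT (X := X)) := fun _ _ hfg _ =>
  iSup_mono fun _ => EReal.sub_le_sub le_rfl (hfg _)

theorem JT_JT_le (f : X × StrongDual ℝ X → EReal) : JT (JT f) ≤ f := fun p => by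
  rw [JT_apply]
  exact iSup_le fun q => EReal.coe_sub_le_comm _ _ _ <| by
    simpa only [coupling_comm] using coupling_sub_le_JT f q p

theorem pairingFn_le_of_JT_le {g : X × StrongDual ℝ X → EReal} (hg : JT g ≤ g)
    (p : X × StrongDual ℝ X) : (pairingFn p : EReal) ≤ g p := by
  have key := (coupling_sub_le_JT g p p).trans (hg p)
  rw [coupling_self] at key
  induction hgp : g p with
  | bot => rw [hgp, EReal.coe_sub_bot, top_le_iff] at key; exact absurd key bot_ne_top
  | top => exact le_top
  | coe G =>
    rw [hgp, ← EReal.coe_sub, EReal.coe_le_coe_iff] at key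
    exact EReal.coe_le_coe_iff.2 (by linarith)

theorem coupling_le_add_of_JT_le {f g : X × StrongDual ℝ X → EReal} (hJ : JT g ≤ f)
    {a b : X × StrongDual ℝ X} {x y : ℝ} (ha : g a ≤ x) (hb : f b ≤ y) :
    coupling a b ≤ x + y := by
  have key : ((coupling a b - x : ℝ) : EReal) ≤ y :=
    (EReal.sub_le_sub le_rfl ha).trans ((coupling_sub_le_JT g b a).trans ((hJ b).trans hb))
  linarith [EReal.coe_le_coe_iff.1 key]

def quad (w : X × StrongDual ℝ X) : ℝ := (‖w.1‖ ^ 2 + ‖w.2‖ ^ 2) / 2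

theorem quad_smul (a : ℝ) (w : X × StrongDual ℝ X) : quad (a • w) = a ^ 2 * quad w := by
  simp only [quad, Prod.smul_fst, Prod.smul_snd, norm_smul, mul_pow, Real.norm_eq_abs, sq_abs]
  ring

theorem coupling_le_quad_add_quad (v w : X × StrongDual ℝ X) : coupling v w ≤ quad v + quad w := by
  have h₁ : w.2 v.1 ≤ ‖w.2‖ * ‖v.1‖ := (le_abs_self _).trans (w.2.le_opNorm v.1)
  have h₂ : v.2 w.1 ≤ ‖v.2‖ * ‖w.1‖ := (le_abs_self _).trans (v.2.le_opNorm w.1)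
  rw [coupling_apply, quad, quad]
  nlinarith [sq_nonneg (‖w.2‖ - ‖v.1‖), sq_nonneg (‖v.2‖ - ‖w.1‖)]

theorem coupling_sub_add_add_coupling_sub_add (p r v w : X × StrongDual ℝ X) :
    coupling (r - v) (p + w) + coupling (p - w) (r + v) = 2 * coupling r p - 2 * coupling v w := by
  simp only [coupling_apply, Prod.fst_sub, Prod.snd_sub, map_add, map_sub, sub_apply]
  ring

/-- The proximal average `⨅ w, ½ f (r + w) + ½ g (r - w) + quad w`, written with real upper
bounds `K ≥ f (r + w)`, `H ≥ g (r - w)` so that no `⊥ + ⊤` arises. -/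
def proxAvg (f g : X × StrongDual ℝ X → EReal) (r : X × StrongDual ℝ X) : EReal :=
  ⨅ (w) (K : ℝ) (_ : f (r + w) ≤ K) (H : ℝ) (_ : g (r - w) ≤ H),
    ((K / 2 + H / 2 + quad w : ℝ) : EReal)

theorem le_proxAvg_iff {f g : X × StrongDual ℝ X → EReal} {r : X × StrongDual ℝ X} {a : EReal} :
    a ≤ proxAvg f g r ↔ ∀ w (K H : ℝ), f (r + w) ≤ K → g (r - w) ≤ H →
      a ≤ ((K / 2 + H / 2 + quad w : ℝ) : EReal) := by
  simp only [proxAvg, le_iInf_iff]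
  grind

theorem proxAvg_le {f g : X × StrongDual ℝ X → EReal} {r w : X × StrongDual ℝ X} {K H : ℝ}
    (hK : f (r + w) ≤ K) (hH : g (r - w) ≤ H) :
    proxAvg f g r ≤ ((K / 2 + H / 2 + quad w : ℝ) : EReal) :=
  le_proxAvg_iff.1 le_rfl w K H hK hH

theorem coupling_le_of_proxAvg_bounds {f g : X × StrongDual ℝ X → EReal} (hJ : JT g ≤ f)
    {p r v w : X × StrongDual ℝ X} {K₁ H₁ K₂ H₂ : ℝ}
    (hK₁ : f (p + w) ≤ K₁) (hH₁ : g (p - w) ≤ H₁) (hK₂ : f (r + v) ≤ K₂) (hH₂ : g (r - v) ≤ H₂) :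
    coupling r p ≤ (K₁ / 2 + H₁ / 2 + quad w) + (K₂ / 2 + H₂ / 2 + quad v) := by
  have h₁ := coupling_le_add_of_JT_le hJ hH₂ hK₁
  have h₂ := coupling_le_add_of_JT_le hJ hH₁ hK₂
  linarith [coupling_sub_add_add_coupling_sub_add p r v w, coupling_le_quad_add_quad v w]

theorem JT_proxAvg_le {f g : X × StrongDual ℝ X → EReal} (hJ : JT g ≤ f) :
    JT (proxAvg f g) ≤ proxAvg f g := fun r => by
  rw [JT_apply]
  refine iSup_le fun p => EReal.coe_sub_le_comm _ _ _ <| le_proxAvg_iff.2 fun w K₁ H₁ hK₁ hH₁ => ?_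
  refine EReal.coe_sub_le_comm _ _ _ <| le_proxAvg_iff.2 fun v K₂ H₂ hK₂ hH₂ => ?_
  rw [← EReal.coe_sub, EReal.coe_le_coe_iff, coupling_comm]
  linarith [coupling_le_of_proxAvg_bounds hJ hK₁ hH₁ hK₂ hH₂]

theorem proxAvg_le_half_add_half {f g : X × StrongDual ℝ X → EReal} {r : X × StrongDual ℝ X}
    {K H : ℝ} (hK : f r ≤ K) (hH : g r ≤ H) : proxAvg f g r ≤ ((K / 2 + H / 2 : ℝ) : EReal) := by
  simpa [quad] using proxAvg_le (f := f) (g := g) (r := r) (w := 0) (by rwa [add_zero])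
    (by rwa [sub_zero])

theorem proxAvg_le_of_le {f g : X × StrongDual ℝ X → EReal} (hfg : f ≤ g) : proxAvg f g ≤ g :=
  fun _ => EReal.le_of_forall_lt_iff_le.1 fun H hH =>
    (proxAvg_le_half_add_half ((hfg _).trans hH.le) hH.le).trans_eq (by rw [add_halves])

theorem ne_top_of_le_proxAvg {f g : X × StrongDual ℝ X → EReal} (hlsc : LowerSemicontinuous g)
    {b p : X × StrongDual ℝ X} (hb : g b ≠ ⊤) (hg : g ≤ proxAvg f g) (hp : f p ≠ ⊤) :
    g p ≠ ⊤ := by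
  set d := b - p
  set x : ℕ → X × StrongDual ℝ X := fun n => p + (1 / 2 : ℝ) ^ n • d
  set K := (f p).toReal
  set M := max (g b).toReal (K + 2 * quad d)
  have hquad : 0 ≤ quad d := by unfold quad; positivity
  have hbound : ∀ n, g (x n) ≤ M := by
    intro n
    induction n with
    | zero =>
      simpa [x, d] using (EReal.le_coe_toReal hb).trans (EReal.coe_le_coe_iff.2 (le_max_left _ _))
    | succ n ih =>
      set w := -((1 / 2 : ℝ) ^ (n + 1)) • d
      have hxw : x (n + 1) + w = p := by simp only [x, w]; module
      have hxw' : x (n + 1) - w = x n := by simp only [x, w]; module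
      have hfw : f (x (n + 1) + w) ≤ K := hxw ▸ EReal.le_coe_toReal hp
      have hgw : g (x (n + 1) - w) ≤ M := hxw' ▸ ih
      have hw : quad w ≤ quad d := by
        rw [quad_smul]
        have : ((-((1 / 2 : ℝ) ^ (n + 1))) ^ 2) ≤ 1 := by
          rw [neg_sq, ← pow_mul]; exact pow_le_one₀ (by norm_num) (by norm_num)
        nlinarith
      refine (hg _).trans ((proxAvg_le hfw hgw).trans (EReal.coe_le_coe_iff.2 ?_))
      linarith [le_max_right (g b).toReal (K + 2 * quad d)]
  have hx : Filter.Tendsto x Filter.atTop (nhds p) := by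
    have hpow : Filter.Tendsto (fun n : ℕ => (1 / 2 : ℝ) ^ n) Filter.atTop (nhds 0) :=
      tendsto_pow_atTop_nhds_zero_of_lt_one (by norm_num) (by norm_num)
    have := (tendsto_const_nhds (x := p)).add (hpow.smul_const d)
    rwa [zero_smul, add_zero] at this
  have hpM : g p ≤ M :=
    (hlsc.isClosed_preimage M).mem_of_tendsto hx (Filter.Eventually.of_forall hbound)
  exact ne_top_of_le_ne_top (EReal.coe_ne_top M) hpM

theorem le_of_le_proxAvg {f g : X × StrongDual ℝ X → EReal} (hlsc : LowerSemicontinuous g)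
    {b : X × StrongDual ℝ X} (hb : g b ≠ ⊤) (hg : g ≤ proxAvg f g) : g ≤ f :=
  fun p => EReal.le_of_forall_lt_iff_le.1 fun K hK => by
    have hgp : g p ≠ ⊤ := ne_top_of_le_proxAvg hlsc hb hg (ne_top_of_lt hK)
    rcases eq_or_ne (g p) ⊥ with hbot | hbot
    · simp [hbot]
    obtain ⟨G, hG⟩ : ∃ G : ℝ, g p = G := ⟨_, (EReal.coe_toReal hgp hbot).symm⟩
    have key := (hg p).trans (proxAvg_le_half_add_half hK.le hG.le)
    rw [hG, EReal.coe_le_coe_iff] at key ⊢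
    linarith

theorem MaximalMonotoneOp.nonempty {T : Set (X × StrongDual ℝ X)} (hT : MaximalMonotoneOp T) :
    T.Nonempty := by
  by_contra hT₀
  rw [Set.not_nonempty_iff_eq_empty] at hT₀
  simpa [hT₀] using hT.2 0

theorem JT_JT_mem_Lfam {T : Set (X × StrongDual ℝ X)} {h h₀ u : X × StrongDual ℝ X → EReal}
    (hh₀ : h₀ ∈ Lfam T h) (hu : u ≤ h₀) (hJu : JT u ≤ u) : JT (JT u) ∈ Lfam T h := by
  obtain ⟨⟨-, -, -, hT₀⟩, hh₀h, -⟩ := hh₀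
  have hle : JT (JT u) ≤ h₀ := (JT_JT_le u).trans hu
  have hJ : JT (JT (JT u)) ≤ JT (JT u) := (JT_JT_le (JT u)).trans (JT_antitone hJu)
  refine ⟨⟨econvexOn_JT _, lowerSemicontinuous_JT _, pairingFn_le_of_JT_le hJ, fun p hp => ?_⟩,
    hle.trans hh₀h, hJ⟩
  exact le_antisymm ((hle p).trans_eq (hT₀ p hp)) (pairingFn_le_of_JT_le hJ p)

theorem minimal_iff_fixed_point_general
    (T : Set (X × StrongDual ℝ X)) (hT : MaximalMonotoneOp T)
    (h : X × StrongDual ℝ X → EReal)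
    (h₀ : X × StrongDual ℝ X → EReal) (hh₀ : h₀ ∈ Lfam T h) :
    Minimal (· ∈ Lfam T h) h₀ ↔ h₀ = JT h₀ := by
  refine ⟨fun hmin => ?_, fun hfix => ⟨hh₀, fun g hg hgh₀ => ?_⟩⟩
  · obtain ⟨⟨-, hlsc, -, hT₀⟩, -, hJh₀⟩ := hh₀
    obtain ⟨b, hb⟩ := hT.nonempty
    set u := proxAvg (JT h₀) h₀
    have hu : u ≤ h₀ := proxAvg_le_of_le hJh₀
    have hJu : JT u ≤ u := JT_proxAvg_le le_rfl
    have hh₀u : h₀ ≤ u :=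
      (hmin.2 (JT_JT_mem_Lfam hmin.1 hu hJu) ((JT_JT_le u).trans hu)).trans (JT_JT_le u)
    exact le_antisymm (le_of_le_proxAvg hlsc (hT₀ b hb ▸ EReal.coe_ne_top _) hh₀u) hJh₀
  · calc h₀ = JT h₀ := hfix
      _ ≤ JT g := JT_antitone hgh₀
      _ ≤ g := hg.2.2

/-- for `h ∈ H(T)` with `h ≥ J h`, an element `h₀ ∈ L(h)` is minimal in
`L(h)` (pointwise order) iff `h₀ = J h₀`. -/
theorem minimal_iff_fixed_point [CompleteSpace X]
    (T : Set (X × StrongDual ℝ X)) (hT : MaximalMonotoneOp T)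
    (h : X × StrongDual ℝ X → EReal) (hh : h ∈ HT T) (hJ : JT h ≤ h)
    (h₀ : X × StrongDual ℝ X → EReal) (hh₀ : h₀ ∈ Lfam T h) :
    Minimal (· ∈ Lfam T h) h₀ ↔ h₀ = JT h₀ :=
  minimal_iff_fixed_point_general T hT h h₀ hh₀
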